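/- Let X be a chain and let α, β be orientation-preserving partial transformations of X. Then α and β are D-related in the monoid POP(X) (i.e. there exists γ ∈ POP(X) such that α R γ and γ L β, where α R γ means ∃ δ, ε ∈ POP(X) with α = γδ and γ = αε, and γ L β means ∃ δ, ε ∈ POP(X) with γ = δβ and β = εγ, composition written left-to-right with the left factor applied first) if and only if there exists a bijection θ : Im(α) → Im(β) which is orientation-preserving (as a partial transformation of X with domain Im(α)). -/

import Mathlib

/-!
An orientation-preserving partial map becomes order-preserving once its domain is cut at an ideal
`Y` and the two pieces are swapped. Such maps are closed under restriction and composition (split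
the domain of `g ∘ f` into four blocks according to the pieces containing `x` and `f x`), and each
has an orientation-preserving cross-section: take preimages in `Y` whenever possible, which works
because `f` maps `Y` above `Dom f \ Y`.
If `α R γ L β` with `γ = αε`, then `ε` restricted to `Im α` is a bijection onto `Im γ = Im β`.
Conversely, given `θ`, the map `γ = αθ` is `R`-related to `α` through `θ⁻¹`, and `L`-related to
`β` through cross-sections of `β` and of `αθ`.
-/

variable {X : Type*}

/-- The partial transformation `f` is order-preserving on the subset `A` of its domain. -/
def IsOrdOn [LinearOrder X] (f : X →. X) (A : Set X) : Prop :=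
  ∀ ⦃x y u v : X⦄, x ∈ A → y ∈ A → x ≤ y → u ∈ f x → v ∈ f y → u ≤ v

/-- `Y` is an ideal of the partial transformation `f`: a nonempty subset of the domain such
that `f` is order-preserving on `Y` and on `Dom f \ Y`, and every element of `Y` is below every
element of `Dom f \ Y` while its image is above. -/
def IsIdeal [LinearOrder X] (f : X →. X) (Y : Set X) : Prop :=
  Y.Nonempty ∧ Y ⊆ f.Dom ∧ IsOrdOn f Y ∧ IsOrdOn f (f.Dom \ Y) ∧
    ∀ ⦃a b u v : X⦄, a ∈ Y → b ∈ f.Dom \ Y → u ∈ f a → v ∈ f b → a ≤ b ∧ v ≤ u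

/-- `f` is an orientation-preserving partial transformation: it is the empty transformation
or it admits an ideal. -/
def IsOP [LinearOrder X] (f : X →. X) : Prop :=
  f.Dom = ∅ ∨ ∃ Y : Set X, IsIdeal f Y

namespace PFun

variable {α β γ : Type*}

theorem mem_comp_iff {f : β →. γ} {g : α →. β} {a : α} {c : γ} :
    c ∈ f.comp g a ↔ ∃ b ∈ g a, c ∈ f b :=
  Part.mem_bind_iff

theorem ran_comp_subset (f : β →. γ) (g : α →. β) : (f.comp g).ran ⊆ f.ran := by
  rintro c ⟨a, hc⟩
  obtain ⟨b, -, hcb⟩ := mem_comp_iff.mp hc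
  exact ⟨b, hcb⟩

theorem ran_restrict (f : α →. β) {p : Set α} (h : p ⊆ f.Dom) : (f.restrict h).ran = f.image p :=
  Set.ext fun _ => ⟨fun ⟨a, hb⟩ => ⟨a, (mem_restrict h _ _).mp hb⟩,
    fun ⟨a, ha, hb⟩ => ⟨a, (mem_restrict h _ _).mpr ⟨ha, hb⟩⟩⟩

theorem image_ran (f : β →. γ) (g : α →. β) : f.image g.ran = (f.comp g).ran := by
  ext c
  simp only [mem_image, ran, Set.mem_ofPred_eq, mem_comp_iff]
  exact ⟨fun ⟨b, ⟨a, hb⟩, hc⟩ => ⟨a, b, hb, hc⟩, fun ⟨a, b, hb, hc⟩ => ⟨b, ⟨a, hb⟩, hc⟩⟩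

theorem ran_comp_of_ran_eq_dom {f : β →. γ} {g : α →. β} (h : g.ran = f.Dom) :
    (f.comp g).ran = f.ran := by
  rw [← image_ran, h]
  exact Set.ext fun c => ⟨fun ⟨b, _, hc⟩ => ⟨b, hc⟩, fun ⟨b, hc⟩ => ⟨b, (mem_dom f b).mpr ⟨c, hc⟩, hc⟩⟩

def IsSectionOf (s : β →. α) (f : α →. β) : Prop :=
  s.Dom = f.ran ∧ ∀ ⦃b a⦄, a ∈ s b → b ∈ f a

theorem IsSectionOf.comp_comp_eq {f : α →. β} {s : β →. α} {g : γ →. β}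
    (hs : IsSectionOf s f) (hg : g.ran ⊆ f.ran) : f.comp (s.comp g) = g := by
  refine ext fun c b => ⟨fun hb => ?_, fun hb => ?_⟩
  · obtain ⟨a, ha, hba⟩ := mem_comp_iff.mp hb
    obtain ⟨b', hb', hab'⟩ := mem_comp_iff.mp ha
    rwa [Part.mem_unique hba (hs.2 hab')]
  · obtain ⟨a, ha⟩ := (mem_dom s b).mp (hs.1 ▸ hg ⟨c, hb⟩)
    exact mem_comp_iff.mpr ⟨a, mem_comp_iff.mpr ⟨b, hb, ha⟩, hs.2 ha⟩

theorem IsSectionOf.comp {f : α →. β} {g : β →. γ} {s : β →. α} {t : γ →. β}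
    (hs : IsSectionOf s f) (ht : IsSectionOf t g) (hfg : f.ran = g.Dom) :
    IsSectionOf (s.comp t) (g.comp f) := by
  refine ⟨?_, fun c a ha => ?_⟩
  · rw [dom_comp, ran_comp_of_ran_eq_dom hfg, hs.1, ← ht.1]
    refine Set.Subset.antisymm (preimage_subset_dom _ _) fun c hc => ?_
    obtain ⟨b, hb⟩ := (mem_dom t c).mp hc
    exact ⟨b, hfg ▸ (mem_dom g b).mpr ⟨c, ht.2 hb⟩, hb⟩
  · obtain ⟨b, hb, hab⟩ := mem_comp_iff.mp ha
    exact mem_comp_iff.mpr ⟨b, hs.2 hab, ht.2 hb⟩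

theorem IsSectionOf.symm_of_injective {f : α →. β} {s : β →. α} (hs : IsSectionOf s f)
    (hf : ∀ ⦃a a' b⦄, b ∈ f a → b ∈ f a' → a = a') : IsSectionOf f s := by
  have hmem : ∀ ⦃a b⦄, b ∈ f a → a ∈ s b := fun a b hb => by
    obtain ⟨a', ha'⟩ := (mem_dom s b).mp (hs.1 ▸ ⟨a, hb⟩)
    rwa [hf hb (hs.2 ha')]
  refine ⟨Set.Subset.antisymm (fun a ha => ?_) fun a ⟨b, ha⟩ => ?_, hmem⟩
  · obtain ⟨b, hb⟩ := (mem_dom f a).mp ha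
    exact ⟨b, hmem hb⟩
  · exact (mem_dom f a).mpr ⟨b, hs.2 ha⟩

theorem exists_of_mem_comp_of_mem_preimage {f : α →. β} {g : β →. γ} {C : Set β} {a : α} {c : γ}
    (ha : a ∈ f.preimage C) (hc : c ∈ g.comp f a) : ∃ b ∈ C, b ∈ f a ∧ c ∈ g b := by
  obtain ⟨b, hbC, hb⟩ := ha
  obtain ⟨b', hb', hc⟩ := mem_comp_iff.mp hc
  exact ⟨b, hbC, hb, Part.mem_unique hb' hb ▸ hc⟩

theorem mem_dom_comp_cases {f : α →. β} {g : β →. γ} (Y : Set α) {W : Set β} (hW : W ⊆ g.Dom)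
    {a : α} (ha : a ∈ (g.comp f).Dom) :
    (a ∈ Y ∨ a ∈ f.Dom \ Y) ∧ (a ∈ f.preimage W ∨ a ∈ f.preimage (g.Dom \ W)) := by
  rw [dom_comp] at ha
  have haf : a ∈ f.Dom := preimage_subset_dom _ _ ha
  rw [← Set.union_sdiff_cancel hW, preimage_union] at ha
  exact ⟨(em (a ∈ Y)).imp_right fun haY => ⟨haf, haY⟩, ha⟩

theorem exists_mem_of_eq_comp_comp {f : α →. β} {e : β →. γ} {g : γ →. β}
    (h : f = g.comp (e.comp f)) {b : β} (hb : b ∈ f.ran) : ∃ c ∈ e b, b ∈ g c := by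
  obtain ⟨a, hb⟩ := hb
  have hb' := hb
  rw [h] at hb'
  obtain ⟨c, hc, hbc⟩ := mem_comp_iff.mp hb'
  obtain ⟨b', hb'', hcb'⟩ := mem_comp_iff.mp hc
  exact ⟨c, Part.mem_unique hb'' hb ▸ hcb', hbc⟩

theorem ran_subset_dom_of_eq_comp_comp {f : α →. β} {e : β →. γ} {g : γ →. β}
    (h : f = g.comp (e.comp f)) : f.ran ⊆ e.Dom := fun b hb =>
  let ⟨c, hc, _⟩ := exists_mem_of_eq_comp_comp h hb
  (mem_dom e b).mpr ⟨c, hc⟩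

theorem injOn_of_eq_comp_comp {f : α →. β} {e : β →. γ} {g : γ →. β}
    (h : f = g.comp (e.comp f)) {b b' : β} {c : γ} (hb : b ∈ f.ran) (hb' : b' ∈ f.ran)
    (hc : c ∈ e b) (hc' : c ∈ e b') : b = b' := by
  obtain ⟨d, hd, hbd⟩ := exists_mem_of_eq_comp_comp h hb
  obtain ⟨d', hd', hbd'⟩ := exists_mem_of_eq_comp_comp h hb'
  rw [Part.mem_unique hd hc] at hbd
  rw [Part.mem_unique hd' hc'] at hbd'
  exact Part.mem_unique hbd hbd'

theorem exists_dom_eq_of_forall_exists {S : Set α} {P : α → β → Prop}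
    (h : ∀ a ∈ S, ∃ b, P a b) : ∃ s : α →. β, s.Dom = S ∧ ∀ ⦃a b⦄, b ∈ s a → P a b := by
  choose σ hσ using h
  refine ⟨fun a => ⟨a ∈ S, σ a⟩, rfl, ?_⟩
  rintro a b ⟨ha, rfl⟩
  exact hσ a ha

end PFun

open PFun

variable [LinearOrder X] {f g s : X →. X} {A B C D : Set X}

def IsOrdBetween (f : X →. X) (A B : Set X) : Prop :=
  ∀ ⦃a b u v : X⦄, a ∈ A → b ∈ B → u ∈ f a → v ∈ f b → a ≤ b ∧ u ≤ v

def IsFlipBetween (f : X →. X) (A B : Set X) : Prop :=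
  ∀ ⦃a b u v : X⦄, a ∈ A → b ∈ B → u ∈ f a → v ∈ f b → a ≤ b ∧ v ≤ u

/-- Like `IsIdeal`, but possibly empty, so that the empty map has a cut as well. -/
def IsCut (f : X →. X) (Y : Set X) : Prop :=
  Y ⊆ f.Dom ∧ IsOrdOn f Y ∧ IsOrdOn f (f.Dom \ Y) ∧ IsFlipBetween f Y (f.Dom \ Y)

theorem IsOrdOn.mono (h : IsOrdOn f A) (hBA : B ⊆ A) : IsOrdOn f B :=
  fun _ _ _ _ hx hy => h (hBA hx) (hBA hy)

theorem IsFlipBetween.mono (h : IsFlipBetween f A B) (hCA : C ⊆ A) (hDB : D ⊆ B) :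
    IsFlipBetween f C D :=
  fun _ _ _ _ ha hb => h (hCA ha) (hDB hb)

theorem IsOrdOn.of_subgraph (h : IsOrdOn f A) (hgf : ∀ ⦃x u⦄, u ∈ g x → u ∈ f x) :
    IsOrdOn g A :=
  fun _ _ _ _ hx hy hxy hu hv => h hx hy hxy (hgf hu) (hgf hv)

theorem IsFlipBetween.of_subgraph (h : IsFlipBetween f A B)
    (hgf : ∀ ⦃x u⦄, u ∈ g x → u ∈ f x) : IsFlipBetween g A B :=
  fun _ _ _ _ ha hb hu hv => h ha hb (hgf hu) (hgf hv)

theorem IsOrdOn.union (hA : IsOrdOn f A) (hB : IsOrdOn f B) (hAB : IsOrdBetween f A B) :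
    IsOrdOn f (A ∪ B) := by
  rintro x y u v (hx | hx) (hy | hy) hxy hu hv
  · exact hA hx hy hxy hu hv
  · exact (hAB hx hy hu hv).2
  · obtain rfl : x = y := le_antisymm hxy (hAB hy hx hv hu).1
    exact (Part.mem_unique hu hv).le
  · exact hB hx hy hxy hu hv

theorem IsFlipBetween.union_left (hAC : IsFlipBetween f A C) (hBC : IsFlipBetween f B C) :
    IsFlipBetween f (A ∪ B) C := by
  rintro a b u v (ha | ha) hb
  exacts [hAC ha hb, hBC ha hb]

theorem IsFlipBetween.union_right (hAB : IsFlipBetween f A B) (hAC : IsFlipBetween f A C) :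
    IsFlipBetween f A (B ∪ C) := by
  rintro a b u v ha (hb | hb)
  exacts [hAB ha hb, hAC ha hb]

theorem isOP_iff_exists_isCut : IsOP f ↔ ∃ Y, IsCut f Y := by
  constructor
  · rintro (hf | ⟨Y, -, hY⟩)
    · refine ⟨∅, Set.empty_subset _, fun _ _ _ _ hx => absurd hx (Set.notMem_empty _), ?_,
        fun _ _ _ _ ha => absurd ha (Set.notMem_empty _)⟩
      rw [hf]
      exact fun _ _ _ _ hx => absurd hx.1 (Set.notMem_empty _)
    · exact ⟨Y, hY⟩
  · rintro ⟨Y, hY⟩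
    rcases Y.eq_empty_or_nonempty with rfl | hYne
    · rcases f.Dom.eq_empty_or_nonempty with hf | hf
      · exact Or.inl hf
      · obtain ⟨-, -, hord, -⟩ := hY
        rw [Set.sdiff_empty] at hord
        refine Or.inr ⟨f.Dom, hf, subset_rfl, hord, ?_, ?_⟩
        · exact fun _ _ _ _ hx => absurd hx.1 hx.2
        · exact fun _ _ _ _ _ hb => absurd hb.1 hb.2
    · exact Or.inr ⟨Y, hYne, hY⟩

theorem IsOP.mono (hf : IsOP f) (hgf : ∀ ⦃x u⦄, u ∈ g x → u ∈ f x) : IsOP g := by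
  obtain ⟨Y, -, hY, hZ, hYZ⟩ := isOP_iff_exists_isCut.mp hf
  have hdom : g.Dom ⊆ f.Dom := fun x hx =>
    let ⟨u, hu⟩ := (mem_dom g x).mp hx
    (mem_dom f x).mpr ⟨u, hgf hu⟩
  have hcompl : g.Dom \ (Y ∩ g.Dom) ⊆ f.Dom \ Y := fun x hx =>
    ⟨hdom hx.1, fun hxY => hx.2 ⟨hxY, hx.1⟩⟩
  exact isOP_iff_exists_isCut.mpr ⟨Y ∩ g.Dom, Set.inter_subset_right,
    (hY.of_subgraph hgf).mono Set.inter_subset_left, (hZ.of_subgraph hgf).mono hcompl,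
    (hYZ.of_subgraph hgf).mono Set.inter_subset_left hcompl⟩

theorem IsOrdOn.of_section (hf : IsOrdOn f A) (hs : ∀ ⦃u x⦄, x ∈ s u → u ∈ f x) :
    IsOrdOn s (s.preimage A) := by
  rintro u u' x x' ⟨y, hyA, hy⟩ ⟨y', hy'A, hy'⟩ huu' hx hx'
  obtain rfl := Part.mem_unique hy hx
  obtain rfl := Part.mem_unique hy' hx'
  by_contra! hlt
  obtain rfl : u = u' := le_antisymm huu' (hf hy'A hyA hlt.le (hs hy') (hs hy))
  exact hlt.ne (Part.mem_unique hy' hy)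

theorem IsOP.exists_section (hf : IsOP f) : ∃ s : X →. X, IsOP s ∧ IsSectionOf s f := by
  obtain ⟨Y, -, hY, hZ, hYZ⟩ := isOP_iff_exists_isCut.mp hf
  have hpref : ∀ u ∈ f.ran, ∃ x, u ∈ f x ∧ (u ∈ f.image Y → x ∈ Y) := by
    intro u ⟨x, hx⟩
    by_cases hu : u ∈ f.image Y
    · obtain ⟨y, hy, huy⟩ := hu
      exact ⟨y, huy, fun _ => hy⟩
    · exact ⟨x, hx, fun h => absurd h hu⟩
  obtain ⟨s, hsdom, hs⟩ := exists_dom_eq_of_forall_exists hpref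
  have hsf : IsSectionOf s f := ⟨hsdom, fun _ _ hx => (hs hx).1⟩
  have hsY : ∀ ⦃u x⦄, x ∈ s u → u ∈ f.image Y → x ∈ Y := fun _ _ hx => (hs hx).2
  have hsZ : ∀ ⦃u x⦄, x ∈ s u → u ∉ f.image Y → x ∈ f.Dom \ Y := fun u x hx hu =>
    ⟨(mem_dom f x).mpr ⟨u, hsf.2 hx⟩, fun hxY => hu ⟨x, hxY, hsf.2 hx⟩⟩
  have hval : ∀ ⦃u⦄, u ∈ f.ran → ∃ x, x ∈ s u := fun u hu => (mem_dom s u).mp (hsdom ▸ hu)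
  have hcompl : s.Dom \ (f.ran \ f.image Y) ⊆ f.image Y := fun u hu =>
    not_not.mp fun h => hu.2 ⟨hsdom ▸ hu.1, h⟩
  refine ⟨s, isOP_iff_exists_isCut.mpr ⟨f.ran \ f.image Y, hsdom ▸ Set.sdiff_subset, ?_, ?_, ?_⟩,
    hsf⟩
  · refine (hZ.of_section hsf.2).mono fun u hu => ?_
    obtain ⟨x, hx⟩ := hval hu.1
    exact ⟨x, hsZ hx hu.2, hx⟩
  · refine (hY.of_section hsf.2).mono fun u hu => ?_
    obtain ⟨x, hx⟩ := hval (hsdom ▸ hu.1)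
    exact ⟨x, hsY hx (hcompl hu), hx⟩
  · intro a b x y ha hb hx hy
    exact (hYZ (hsY hy (hcompl hb)) (hsZ hx ha.2) (hsf.2 hy) (hsf.2 hx)).symm

theorem IsOrdOn.comp (hf : IsOrdOn f A) (hg : IsOrdOn g C) :
    IsOrdOn (g.comp f) (A ∩ f.preimage C) := by
  intro x y u v hx hy hxy hu hv
  obtain ⟨p, hpC, hp, hup⟩ := exists_of_mem_comp_of_mem_preimage hx.2 hu
  obtain ⟨q, hqC, hq, hvq⟩ := exists_of_mem_comp_of_mem_preimage hy.2 hv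
  exact hg hpC hqC (hf hx.1 hy.1 hxy hp hq) hup hvq

theorem IsFlipBetween.comp_isOrdOn (hf : IsFlipBetween f A B) (hg : IsOrdOn g C) :
    IsFlipBetween (g.comp f) (A ∩ f.preimage C) (B ∩ f.preimage C) := by
  intro x y u v hx hy hu hv
  obtain ⟨p, hpC, hp, hup⟩ := exists_of_mem_comp_of_mem_preimage hx.2 hu
  obtain ⟨q, hqC, hq, hvq⟩ := exists_of_mem_comp_of_mem_preimage hy.2 hv
  obtain ⟨hxy, hqp⟩ := hf hx.1 hy.1 hp hq
  exact ⟨hxy, hg hqC hpC hqp hvq hup⟩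

theorem IsOrdOn.comp_isFlipBetween (hf : IsOrdOn f A) (hg : IsFlipBetween g C D)
    (hCD : Disjoint C D) :
    IsFlipBetween (g.comp f) (A ∩ f.preimage C) (A ∩ f.preimage D) := by
  intro x y u v hx hy hu hv
  obtain ⟨p, hpC, hp, hup⟩ := exists_of_mem_comp_of_mem_preimage hx.2 hu
  obtain ⟨q, hqD, hq, hvq⟩ := exists_of_mem_comp_of_mem_preimage hy.2 hv
  obtain ⟨hpq, hvu⟩ := hg hpC hqD hup hvq
  refine ⟨le_of_not_gt fun hyx => ?_, hvu⟩
  obtain rfl : q = p := le_antisymm (hf hy.1 hx.1 hyx.le hq hp) hpq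
  exact hCD.ne_of_mem hpC hqD rfl

theorem IsFlipBetween.comp_isFlipBetween (hf : IsFlipBetween f A B) (hg : IsFlipBetween g C D) :
    IsOrdBetween (g.comp f) (A ∩ f.preimage D) (B ∩ f.preimage C) := by
  intro x y u v hx hy hu hv
  obtain ⟨p, hpD, hp, hup⟩ := exists_of_mem_comp_of_mem_preimage hx.2 hu
  obtain ⟨q, hqC, hq, hvq⟩ := exists_of_mem_comp_of_mem_preimage hy.2 hv
  exact ⟨(hf hx.1 hy.1 hp hq).1, (hg hqC hpD hvq hup).2⟩

theorem IsFlipBetween.inter_preimage_eq_empty (hf : IsFlipBetween f A B)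
    (hg : IsFlipBetween g C D) (hCD : Disjoint C D) (hC : C ⊆ g.Dom) (hD : D ⊆ g.Dom)
    (hAC : (A ∩ f.preimage C).Nonempty) : B ∩ f.preimage D = ∅ := by
  obtain ⟨x, hxA, p, hpC, hp⟩ := hAC
  refine Set.eq_empty_of_forall_notMem fun y ⟨hyB, q, hqD, hq⟩ => ?_
  obtain ⟨u, hu⟩ := (mem_dom g p).mp (hC hpC)
  obtain ⟨v, hv⟩ := (mem_dom g q).mp (hD hqD)
  obtain rfl : p = q := le_antisymm (hg hpC hqD hu hv).1 (hf hxA hyB hp hq).2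
  exact hCD.ne_of_mem hpC hqD rfl

/-- With `Z = Dom f \ Y` and `V = Dom g \ W`, the domain of `g ∘ f` splits into the blocks
`YW < YV < ZW < ZV` (`YV` meaning `x ∈ Y`, `f x ∈ V`), of which `YW` and `ZV` cannot both be
nonempty. The cut is `YW` if it is nonempty, and `YV ∪ ZW` otherwise. -/
theorem IsOP.comp (hf : IsOP f) (hg : IsOP g) : IsOP (g.comp f) := by
  obtain ⟨Y, -, hfY, hfZ, hfYZ⟩ := isOP_iff_exists_isCut.mp hf
  obtain ⟨W, hWdom, hgW, hgV, hgWV⟩ := isOP_iff_exists_isCut.mp hg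
  set Z := f.Dom \ Y
  set V := g.Dom \ W
  have hWV : Disjoint W V := Set.disjoint_sdiff_right
  have hblock_dom : ∀ {P : Set X}, P ⊆ g.Dom → f.preimage P ⊆ (g.comp f).Dom := fun hP =>
    (dom_comp g f).symm ▸ preimage_mono f hP
  have hmiddle : IsOrdOn (g.comp f) (Y ∩ f.preimage V ∪ Z ∩ f.preimage W) :=
    (hfY.comp hgV).union (hfZ.comp hgW) (hfYZ.comp_isFlipBetween hgWV)
  refine isOP_iff_exists_isCut.mpr ?_
  by_cases hYW : (Y ∩ f.preimage W).Nonempty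
  · have hZV := hfYZ.inter_preimage_eq_empty hgWV hWV hWdom Set.sdiff_subset hYW
    have hrest : (g.comp f).Dom \ (Y ∩ f.preimage W) ⊆ Y ∩ f.preimage V ∪ Z ∩ f.preimage W := by
      rintro x ⟨hx, hxYW⟩
      obtain ⟨hY | hZ, hW | hV⟩ := mem_dom_comp_cases Y hWdom hx
      · exact absurd ⟨hY, hW⟩ hxYW
      · exact Or.inl ⟨hY, hV⟩
      · exact Or.inr ⟨hZ, hW⟩
      · exact absurd (hZV ▸ ⟨hZ, hV⟩ : x ∈ (∅ : Set X)) (Set.notMem_empty x)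
    exact ⟨Y ∩ f.preimage W, fun x hx => hblock_dom hWdom hx.2, hfY.comp hgW, hmiddle.mono hrest,
      ((hfY.comp_isFlipBetween hgWV hWV).union_right (hfYZ.comp_isOrdOn hgW)).mono subset_rfl
        hrest⟩
  · have hrest : (g.comp f).Dom \ (Y ∩ f.preimage V ∪ Z ∩ f.preimage W) ⊆ Z ∩ f.preimage V := by
      rintro x ⟨hx, hxmid⟩
      obtain ⟨hY | hZ, hW | hV⟩ := mem_dom_comp_cases Y hWdom hx
      · exact absurd ⟨x, hY, hW⟩ hYW
      · exact absurd (Or.inl ⟨hY, hV⟩) hxmid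
      · exact absurd (Or.inr ⟨hZ, hW⟩) hxmid
      · exact ⟨hZ, hV⟩
    exact ⟨Y ∩ f.preimage V ∪ Z ∩ f.preimage W,
      Set.union_subset (fun x hx => hblock_dom Set.sdiff_subset hx.2)
        (fun x hx => hblock_dom hWdom hx.2),
      hmiddle, (hfZ.comp hgV).mono hrest,
      ((hfYZ.comp_isOrdOn hgV).union_left (hfZ.comp_isFlipBetween hgWV hWV)).mono subset_rfl
        hrest⟩

/-- Green's relation `D` in `POP(X)`: `α D β` iff there is an orientation-preserving
bijection `θ` from `Im α` onto `Im β`. -/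
theorem stmt17 (X : Type*) [LinearOrder X] (α β : X →. X)
    (hα : IsOP α) (hβ : IsOP β) :
    (∃ γ : X →. X, IsOP γ ∧
      (∃ δ ε : X →. X, IsOP δ ∧ IsOP ε ∧ α = δ.comp γ ∧ γ = ε.comp α) ∧
      (∃ δ ε : X →. X, IsOP δ ∧ IsOP ε ∧ γ = β.comp δ ∧ β = γ.comp ε)) ↔
    (∃ θ : X →. X, IsOP θ ∧ θ.Dom = α.ran ∧
      (∀ ⦃x y u : X⦄, u ∈ θ x → u ∈ θ y → x = y) ∧ θ.ran = β.ran) := by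
  constructor
  · rintro ⟨γ, -, ⟨δ, ε, -, hε, hαγ, hγα⟩, ⟨δ', ε', -, -, hγβ, hβγ⟩⟩
    have hαε : α = δ.comp (ε.comp α) := by rwa [← hγα]
    have hdom := ran_subset_dom_of_eq_comp_comp hαε
    refine ⟨ε.restrict hdom, hε.mono fun x u hu => ((mem_restrict hdom x u).mp hu).2, rfl,
      fun x y u hx hy => ?_, ?_⟩
    · rw [mem_restrict] at hx hy
      exact injOn_of_eq_comp_comp hαε hx.1 hy.1 hx.2 hy.2
    · rw [ran_restrict, image_ran, ← hγα]
      exact (hγβ ▸ ran_comp_subset β δ').antisymm (hβγ ▸ ran_comp_subset γ ε')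
  · rintro ⟨θ, hθ, hθdom, hθinj, hθran⟩
    obtain ⟨sα, hsα, hαsα⟩ := hα.exists_section
    obtain ⟨sβ, hsβ, hβsβ⟩ := hβ.exists_section
    obtain ⟨sθ, hsθ, hθsθ⟩ := hθ.exists_section
    have hsθθ := hθsθ.symm_of_injective hθinj
    have hγran : (θ.comp α).ran = β.ran := (ran_comp_of_ran_eq_dom hθdom.symm).trans hθran
    exact ⟨θ.comp α, hα.comp hθ,
      ⟨sθ, θ, hsθ, hθ, (hsθθ.comp_comp_eq (hsθθ.1.symm.trans hθdom).superset).symm, rfl⟩,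
      ⟨sβ.comp (θ.comp α), (sα.comp sθ).comp β, (hα.comp hθ).comp hsβ, hβ.comp (hsθ.comp hsα),
        (hβsβ.comp_comp_eq hγran.subset).symm,
        ((hαsα.comp hθsθ hθdom.symm).comp_comp_eq hγran.superset).symm⟩⟩
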